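/- arXiv:2301.12841 — 3 statements merged into one kernel-verified Lean document; each statement's English description precedes it below -/
import Mathlib

section
/- Let q be an odd prime power, d ≥ 1, 𝓔 ⊆ F_q^d a finite set, r ∈ F_q, and k ≥ 2 an integer. Let B denote the set of tuples (x_1, ..., x_{k+1}, y_1, ..., y_{k+1}) ∈ S_k(r) such that x_1, ..., x_{k+1} are pairwise distinct and y_1, ..., y_{k+1} are pairwise distinct. Then |B| ≥ |S_k(r)| − C(k,2)·(2|𝓔| − 1)·|S_{k−1}(r)|, where C(k,2) = k(k−1)/2. -/
/-- `norm2 x = x₁² + ⋯ + x_d²` for `x ∈ F_q^d`. -/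
def norm2 {F : Type*} [Field F] {d : ℕ} (x : Fin d → F) : F := ∑ i, x i ^ 2

/-- `𝓔` contains a pair of `k`-stars with dilation ratio `r`: there are distinct
`x₁, …, x_{k+1} ∈ 𝓔` and distinct `y₁, …, y_{k+1} ∈ 𝓔` with
`‖y_i − y₁‖ = r‖x_i − x₁‖ ≠ 0` for `i = 2, …, k+1`. -/
def ContainsPairOfStars {F : Type*} [Field F] {d : ℕ}
    (𝓔 : Finset (Fin d → F)) (k : ℕ) (r : F) : Prop :=
  ∃ x y : Fin (k + 1) → (Fin d → F),
    Function.Injective x ∧ Function.Injective y ∧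
    (∀ i, x i ∈ 𝓔) ∧ (∀ i, y i ∈ 𝓔) ∧
    ∀ i : Fin (k + 1), i ≠ 0 →
      norm2 (y i - y 0) = r * norm2 (x i - x 0) ∧ r * norm2 (x i - x 0) ≠ 0

/-- `𝓔` contains a pair of `k`-paths with dilation ratio `r`: there are distinct
`x₁, …, x_{k+1} ∈ 𝓔` and distinct `y₁, …, y_{k+1} ∈ 𝓔` with
`‖y_{i+1} − y_i‖ = r‖x_{i+1} − x_i‖ ≠ 0` for `i = 1, …, k`. -/
def ContainsPairOfPaths {F : Type*} [Field F] {d : ℕ}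
    (𝓔 : Finset (Fin d → F)) (k : ℕ) (r : F) : Prop :=
  ∃ x y : Fin (k + 1) → (Fin d → F),
    Function.Injective x ∧ Function.Injective y ∧
    (∀ i, x i ∈ 𝓔) ∧ (∀ i, y i ∈ 𝓔) ∧
    ∀ i : Fin k,
      norm2 (y i.succ - y i.castSucc) = r * norm2 (x i.succ - x i.castSucc) ∧
      r * norm2 (x i.succ - x i.castSucc) ≠ 0

open scoped Classical

/-- `S_k(r)`: tuples `(x₁, …, x_{k+1}, y₁, …, y_{k+1}) ∈ 𝓔^{2k+2}` with
`‖y_i − y₁‖ = r‖x_i − x₁‖ ≠ 0` for all `i = 2, …, k+1`. -/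

noncomputable def Sset {F : Type*} [Field F] [Fintype F] {d : ℕ}
    (𝓔 : Finset (Fin d → F)) (k : ℕ) (r : F) :
    Finset ((Fin (k + 1) → Fin d → F) × (Fin (k + 1) → Fin d → F)) :=
  Finset.univ.filter fun p =>
    (∀ i, p.1 i ∈ 𝓔) ∧ (∀ i, p.2 i ∈ 𝓔) ∧
    ∀ i : Fin (k + 1), i ≠ 0 →
      norm2 (p.2 i - p.2 0) = r * norm2 (p.1 i - p.1 0) ∧
      r * norm2 (p.1 i - p.1 0) ≠ 0

/-!
A degenerate tuple of `S_k(r)` repeats a point among `x_2, …, x_{k+1}` or among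
`y_2, …, y_{k+1}`, since a repetition of `x_1` or `y_1` would make a distance vanish. So it lies
in one of `C(k,2)` sets indexed by pairs `i < j` of positions after the first. Deleting position
`j` maps such a set into `S_{k-1}(r)`, and a tuple is recovered from its image and `(x_j, y_j)`,
where `x_j = x_i` or `y_j = y_i` leaves at most `2|𝓔| - 1` choices.
-/

open Finset Function

theorem card_filter_fst_eq_or_snd_eq_add_one {α β : Type*} [DecidableEq α] [DecidableEq β]
    {s : Finset α} {t : Finset β} {a : α} {b : β} (ha : a ∈ s) (hb : b ∈ t) :
    #{z ∈ s ×ˢ t | z.1 = a ∨ z.2 = b} + 1 = #s + #t := by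
  have hunion : {z ∈ s ×ˢ t | z.1 = a ∨ z.2 = b} = {a} ×ˢ t ∪ s ×ˢ {b} := by
    ext ⟨x, y⟩
    simp only [mem_filter, mem_product, mem_union, mem_singleton]
    constructor
    · rintro ⟨⟨hx, hy⟩, rfl | rfl⟩ <;> simp [*]
    · rintro (⟨rfl, hy⟩ | ⟨hx, rfl⟩) <;> simp [*]
  have hinter : {a} ×ˢ t ∩ s ×ˢ {b} = {(a, b)} := by
    rw [product_inter_product, singleton_inter_of_mem ha, inter_singleton_of_mem hb,
      singleton_product_singleton]
  rw [hunion, ← card_singleton (a, b), ← hinter, card_union_add_card_inter, card_product,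
    card_product, card_singleton, card_singleton, one_mul, mul_one, add_comm]

section Sset

variable {F : Type*} [Field F] [Fintype F] {d : ℕ} {𝓔 : Finset (Fin d → F)} {r : F} {k : ℕ}
  {p : (Fin (k + 1) → Fin d → F) × (Fin (k + 1) → Fin d → F)}

theorem mem_Sset : p ∈ Sset 𝓔 k r ↔ (∀ i, p.1 i ∈ 𝓔) ∧ (∀ i, p.2 i ∈ 𝓔) ∧
    ∀ i : Fin (k + 1), i ≠ 0 →
      norm2 (p.2 i - p.2 0) = r * norm2 (p.1 i - p.1 0) ∧ r * norm2 (p.1 i - p.1 0) ≠ 0 := by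
  simp [Sset]

theorem fst_ne_fst_zero_and_snd_ne_snd_zero_of_mem_Sset (hp : p ∈ Sset 𝓔 k r) {i : Fin (k + 1)}
    (hi : i ≠ 0) : p.1 i ≠ p.1 0 ∧ p.2 i ≠ p.2 0 := by
  obtain ⟨hdil, hne⟩ := (mem_Sset.1 hp).2.2 i hi
  refine ⟨fun h => hne ?_, fun h => hne ?_⟩
  · simp [h, norm2]
  · rw [← hdil, h, sub_self]
    simp [norm2]

theorem removeNth_mem_Sset {p : (Fin (k + 2) → Fin d → F) × (Fin (k + 2) → Fin d → F)}
    (hp : p ∈ Sset 𝓔 (k + 1) r) {j : Fin (k + 2)} (hj : j ≠ 0) :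
    Prod.map j.removeNth j.removeNth p ∈ Sset 𝓔 k r := by
  obtain ⟨hx, hy, hdil⟩ := mem_Sset.1 hp
  have hj0 : j.succAbove 0 = 0 := Fin.succAbove_ne_zero_zero hj
  refine mem_Sset.2 ⟨fun i => hx _, fun i => hy _, fun i hi => ?_⟩
  simpa [Fin.removeNth_apply, hj0] using hdil _ (Fin.succAbove_ne_zero hj hi)

/-- A tuple is determined by its image `s` under deletion of position `j` and by `(x_j, y_j)`. -/
theorem card_filter_removeNth_eq_le (j : Fin (k + 2)) (i : Fin (k + 1))
    (s : (Fin (k + 1) → Fin d → F) × (Fin (k + 1) → Fin d → F)) :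
    #{p ∈ {p ∈ Sset 𝓔 (k + 1) r | p.1 (j.succAbove i) = p.1 j ∨ p.2 (j.succAbove i) = p.2 j} |
        Prod.map j.removeNth j.removeNth p = s}
      ≤ #{z ∈ 𝓔 ×ˢ 𝓔 | z.1 = s.1 i ∨ z.2 = s.2 i} := by
  refine card_le_card_of_injOn (fun p => (p.1 j, p.2 j)) ?_ ?_
  · intro p hp
    simp only [Finset.mem_coe, mem_filter] at hp
    obtain ⟨⟨hpS, hcoinc⟩, rfl⟩ := hp
    rw [Finset.mem_coe, mem_filter, mem_product]
    exact ⟨⟨(mem_Sset.1 hpS).1 j, (mem_Sset.1 hpS).2.1 j⟩, hcoinc.imp Eq.symm Eq.symm⟩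
  · intro p hp q hq hpq
    rw [Finset.mem_coe, mem_filter] at hp hq
    obtain ⟨hx, hy⟩ := Prod.mk.inj hpq
    obtain ⟨hremx, hremy⟩ := Prod.mk.inj (hp.2.trans hq.2.symm)
    exact Prod.ext ((Fin.insertNthEquiv _ j).symm.injective (Prod.ext hx hremx))
      ((Fin.insertNthEquiv _ j).symm.injective (Prod.ext hy hremy))

theorem card_Sset_filter_eq_or_eq_le {i j : Fin (k + 2)} (hj : j ≠ 0) (hij : i ≠ j) :
    (#{p ∈ Sset 𝓔 (k + 1) r | p.1 i = p.1 j ∨ p.2 i = p.2 j} : ℤ)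
      ≤ (2 * #𝓔 - 1) * #(Sset 𝓔 k r) := by
  obtain ⟨i, rfl⟩ := Fin.exists_succAbove_eq hij
  set coincident := {p ∈ Sset 𝓔 (k + 1) r | p.1 (j.succAbove i) = p.1 j ∨
    p.2 (j.succAbove i) = p.2 j}
  have hmaps : ∀ p ∈ coincident, Prod.map j.removeNth j.removeNth p ∈ Sset 𝓔 k r :=
    fun p hp => removeNth_mem_Sset (mem_filter.1 hp).1 hj
  calc (#coincident : ℤ)
      = ∑ s ∈ Sset 𝓔 k r, (#{p ∈ coincident | Prod.map j.removeNth j.removeNth p = s} : ℤ) := by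
        exact_mod_cast card_eq_sum_card_fiberwise hmaps
    _ ≤ ∑ s ∈ Sset 𝓔 k r, (2 * #𝓔 - 1 : ℤ) := by
        refine sum_le_sum fun s hs => ?_
        have hcross := card_filter_fst_eq_or_snd_eq_add_one
          ((mem_Sset.1 hs).1 i) ((mem_Sset.1 hs).2.1 i)
        have hfiber : #{p ∈ coincident | Prod.map j.removeNth j.removeNth p = s}
            ≤ #{z ∈ 𝓔 ×ˢ 𝓔 | z.1 = s.1 i ∨ z.2 = s.2 i} := card_filter_removeNth_eq_le j i s
        omega
    _ = (2 * #𝓔 - 1) * #(Sset 𝓔 k r) := by rw [sum_const, nsmul_eq_mul, mul_comm]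

theorem exists_lt_eq_or_eq_of_not_injective (hp : p ∈ Sset 𝓔 k r)
    (hinj : ¬(Injective p.1 ∧ Injective p.2)) :
    ∃ a b : Fin k, a < b ∧ (p.1 a.succ = p.1 b.succ ∨ p.2 a.succ = p.2 b.succ) := by
  obtain ⟨a, b, hab, hcoinc⟩ : ∃ a b, a ≠ b ∧ (p.1 a = p.1 b ∨ p.2 a = p.2 b) := by
    simp only [not_and_or, not_injective_iff] at hinj
    rcases hinj with ⟨a, b, h, hab⟩ | ⟨a, b, h, hab⟩
    exacts [⟨a, b, hab, .inl h⟩, ⟨a, b, hab, .inr h⟩]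
  have hcoinc_zero {b : Fin (k + 1)} (hb : b ≠ 0) : ¬(p.1 b = p.1 0 ∨ p.2 b = p.2 0) := by
    have := fst_ne_fst_zero_and_snd_ne_snd_zero_of_mem_Sset hp hb
    tauto
  have ha : a ≠ 0 := by
    rintro rfl
    exact hcoinc_zero hab.symm (hcoinc.imp Eq.symm Eq.symm)
  have hb : b ≠ 0 := by
    rintro rfl
    exact hcoinc_zero hab hcoinc
  obtain ⟨a, rfl⟩ := Fin.exists_succ_eq.2 ha
  obtain ⟨b, rfl⟩ := Fin.exists_succ_eq.2 hb
  rcases (Fin.succ_injective _ |>.ne_iff.1 hab).lt_or_gt with h | h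
  exacts [⟨a, b, h, hcoinc⟩, ⟨b, a, h, hcoinc.imp Eq.symm Eq.symm⟩]

theorem card_Sset_sub_le_card_filter_injective :
    (#(Sset 𝓔 (k + 1) r) : ℤ) - (k + 1).choose 2 * (2 * #𝓔 - 1) * #(Sset 𝓔 k r)
      ≤ #{p ∈ Sset 𝓔 (k + 1) r | Injective p.1 ∧ Injective p.2} := by
  set S := Sset 𝓔 (k + 1) r
  set pairs : Finset (Fin (k + 1) × Fin (k + 1)) := {q | q.1 < q.2}
  have hcover : {p ∈ S | ¬(Injective p.1 ∧ Injective p.2)} ⊆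
      pairs.biUnion fun q =>
        {p ∈ S | p.1 q.1.succ = p.1 q.2.succ ∨ p.2 q.1.succ = p.2 q.2.succ} := by
    intro p hp
    rw [mem_filter] at hp
    obtain ⟨a, b, hab, hcoinc⟩ := exists_lt_eq_or_eq_of_not_injective hp.1 hp.2
    exact mem_biUnion.2 ⟨(a, b), mem_filter.2 ⟨mem_univ _, hab⟩, mem_filter.2 ⟨hp.1, hcoinc⟩⟩
  have hdegenerate : (#{p ∈ S | ¬(Injective p.1 ∧ Injective p.2)} : ℤ)
      ≤ (k + 1).choose 2 * ((2 * #𝓔 - 1) * #(Sset 𝓔 k r)) := by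
    calc (#{p ∈ S | ¬(Injective p.1 ∧ Injective p.2)} : ℤ)
        ≤ ∑ q ∈ pairs,
            (#{p ∈ S | p.1 q.1.succ = p.1 q.2.succ ∨ p.2 q.1.succ = p.2 q.2.succ} : ℤ) := by
          exact_mod_cast (card_le_card hcover).trans card_biUnion_le
      _ ≤ ∑ q ∈ pairs, ((2 * #𝓔 - 1) * #(Sset 𝓔 k r) : ℤ) :=
          sum_le_sum fun q hq => card_Sset_filter_eq_or_eq_le (Fin.succ_ne_zero _)
            (Fin.succ_injective _ |>.ne (mem_filter.1 hq).2.ne)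
      _ = (k + 1).choose 2 * ((2 * #𝓔 - 1) * #(Sset 𝓔 k r)) := by
          rw [sum_const, Fintype.card_product_filter_lt, Fintype.card_fin, nsmul_eq_mul]
  have hsplit := card_filter_add_card_filter_not (s := S) fun p => Injective p.1 ∧ Injective p.2
  zify at hsplit
  linarith

end Sset

theorem Sset_nondegenerate_card_ge_general {F : Type*} [Field F] [Fintype F]
    {d : ℕ}
    (𝓔 : Finset (Fin d → F)) (r : F)
    {k : ℕ} :
    ((Sset 𝓔 k r).card : ℤ)
        - (k.choose 2 : ℤ) * (2 * (𝓔.card : ℤ) - 1) * ((Sset 𝓔 (k - 1) r).card : ℤ)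
      ≤ (((Sset 𝓔 k r).filter fun p =>
          Function.Injective p.1 ∧ Function.Injective p.2).card : ℤ) := by
  cases k with
  | zero =>
    have hinj (p : (Fin 1 → Fin d → F) × (Fin 1 → Fin d → F)) :
        Injective p.1 ∧ Injective p.2 :=
      ⟨injective_of_subsingleton _, injective_of_subsingleton _⟩
    simp [filter_true_of_mem fun p _ => hinj p]
  | succ k => exact card_Sset_sub_le_card_filter_injective

/-- For `k ≥ 2`, if `B` is the set of tuples of `S_k(r)` whose `x`-parts
are pairwise distinct and whose `y`-parts are pairwise distinct, then
`|B| ≥ |S_k(r)| − C(k,2)·(2|𝓔| − 1)·|S_{k−1}(r)|`. -/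
theorem Sset_nondegenerate_card_ge {F : Type*} [Field F] [Fintype F]
    (hodd : Odd (Fintype.card F))
    {d : ℕ} (hd : 1 ≤ d)
    (𝓔 : Finset (Fin d → F)) (r : F)
    {k : ℕ} (hk : 2 ≤ k) :
    ((Sset 𝓔 k r).card : ℤ)
        - (k.choose 2 : ℤ) * (2 * (𝓔.card : ℤ) - 1) * ((Sset 𝓔 (k - 1) r).card : ℤ)
      ≤ (((Sset 𝓔 k r).filter fun p =>
          Function.Injective p.1 ∧ Function.Injective p.2).card : ℤ) :=
  Sset_nondegenerate_card_ge_general 𝓔 r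
end

section
/- Let q be an odd prime power, d ≥ 1, 𝓔 ⊆ F_q^d a nonempty finite set, r ∈ F_q, and k ≥ 2 an integer. If |S_1(r)| ≥ 2·C(k,2)·|𝓔|^3 (where C(k,2) = k(k−1)/2), then 𝓔 contains a pair of k-stars with dilation ratio r. -/
open scoped Classical

/-!
An element of `S_1(r)` is a base pair `(a, b) ∈ 𝓔²` together with a partner `(x, y) ∈ 𝓔²` such that
`‖y − b‖ = r‖x − a‖ ≠ 0`. Since there are only `|𝓔|²` base pairs, the hypothesis gives a base pair
`(a, b)` with at least `k(k−1)|𝓔| > (k−1)(2|𝓔|−1)` partners. A partner shares a coordinate with at most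
`2|𝓔|−1` partners (itself included), so greedily we pick `k` partners `(x_i, y_i)` whose `x_i` are
pairwise distinct and whose `y_i` are pairwise distinct. They differ from `(a, b)` because the
distances to it are nonzero, so `a, x_1, …, x_k` and `b, y_1, …, y_k` are a pair of `k`-stars.
-/

open Finset Function

section Matching

variable {α β : Type*}

lemma card_filter_shares_coord_le {A : Finset α} {B : Finset β} {P : Finset (α × β)}
    (hP : ∀ q ∈ P, q.1 ∈ A ∧ q.2 ∈ B) {p : α × β} (hp : p ∈ P) :
    #(P.filter fun q => q.1 = p.1 ∨ q.2 = p.2) ≤ #A + #B - 1 := by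
  have hsub : P.filter (fun q => q.1 = p.1 ∨ q.2 = p.2) ⊆ ({p.1} ×ˢ B) ∪ (A ×ˢ {p.2}) := by
    intro q hq
    obtain ⟨hqP, hq | hq⟩ := mem_filter.1 hq
    · exact mem_union_left _ (mem_product.2 ⟨mem_singleton.2 hq, (hP q hqP).2⟩)
    · exact mem_union_right _ (mem_product.2 ⟨(hP q hqP).1, mem_singleton.2 hq⟩)
  have hinter : 1 ≤ #(({p.1} ×ˢ B) ∩ (A ×ˢ {p.2})) :=
    card_pos.2 ⟨p, by simp [hP p hp]⟩
  have hunion := card_union_add_card_inter ({p.1} ×ˢ B) (A ×ˢ {p.2})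
  simp only [card_product, card_singleton, one_mul, mul_one] at hunion
  have := card_le_card hsub
  omega

theorem exists_fin_matching (A : Finset α) (B : Finset β) (n : ℕ) {P : Finset (α × β)}
    (hP : ∀ q ∈ P, q.1 ∈ A ∧ q.2 ∈ B) (hcard : n * (#A + #B - 1) < #P) :
    ∃ g : Fin (n + 1) → α × β,
      (∀ i, g i ∈ P) ∧ Injective (Prod.fst ∘ g) ∧ Injective (Prod.snd ∘ g) := by
  induction n generalizing P with
  | zero =>
    obtain ⟨p, hp⟩ := card_pos.1 (Nat.zero_lt_of_lt hcard)
    exact ⟨fun _ => p, fun _ => hp, fun i j _ => Subsingleton.elim (α := Fin 1) i j,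
      fun i j _ => Subsingleton.elim (α := Fin 1) i j⟩
  | succ n ih =>
    obtain ⟨p, hp⟩ := card_pos.1 (Nat.zero_lt_of_lt hcard)
    set P' := P.filter fun q => ¬(q.1 = p.1 ∨ q.2 = p.2)
    have hsplit : #(P.filter fun q => q.1 = p.1 ∨ q.2 = p.2) + #P' = #P :=
      card_filter_add_card_filter_not _
    have hbad := card_filter_shares_coord_le hP hp
    obtain ⟨g, hgP', hfst, hsnd⟩ := ih (P := P')
      (fun q hq => hP q (mem_filter.1 hq).1) (by rw [add_one_mul] at hcard; omega)
    have hgP : ∀ i, g i ∈ P ∧ (g i).1 ≠ p.1 ∧ (g i).2 ≠ p.2 := fun i => by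
      simpa [P', not_or] using hgP' i
    refine ⟨Fin.cons p g, Fin.forall_fin_succ.2 ⟨hp, fun i => (hgP i).1⟩, ?_, ?_⟩
    · rw [Fin.comp_cons, Fin.cons_injective_iff]
      exact ⟨fun ⟨i, hi⟩ => (hgP i).2.1 hi, hfst⟩
    · rw [Fin.comp_cons, Fin.cons_injective_iff]
      exact ⟨fun ⟨i, hi⟩ => (hgP i).2.2 hi, hsnd⟩

end Matching

section Stars

variable {F : Type*} [Field F] {d : ℕ}

lemma ne_of_norm2_sub_ne_zero {x y : Fin d → F} (h : norm2 (x - y) ≠ 0) : x ≠ y := by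
  rintro rfl
  simp [norm2] at h

noncomputable def edgePartners (𝓔 : Finset (Fin d → F)) (r : F) (a b : Fin d → F) :
    Finset ((Fin d → F) × (Fin d → F)) :=
  (𝓔 ×ˢ 𝓔).filter fun q => norm2 (q.2 - b) = r * norm2 (q.1 - a) ∧ r * norm2 (q.1 - a) ≠ 0

lemma card_Sset_one_le_sum_card_edgePartners [Fintype F] (𝓔 : Finset (Fin d → F)) (r : F) :
    #(Sset 𝓔 1 r) ≤ ∑ ab ∈ 𝓔 ×ˢ 𝓔, #(edgePartners 𝓔 r ab.1 ab.2) := by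
  rw [← card_sigma]
  refine card_le_card_of_injOn (fun p => ⟨(p.1 0, p.2 0), (p.1 1, p.2 1)⟩) ?_ ?_
  · intro p hp
    obtain ⟨hx, hy, hxy⟩ := (mem_filter.1 hp).2
    simpa [edgePartners, hx, hy] using hxy 1 one_ne_zero
  · intro p _ p' _ h
    simp only [Sigma.mk.inj_iff, Prod.mk.injEq, heq_eq_eq] at h
    obtain ⟨⟨h10, h20⟩, h11, h21⟩ := h
    ext1 <;> funext i <;> fin_cases i <;> assumption

lemma containsPairOfStars_of_matching {𝓔 : Finset (Fin d → F)} {r : F} {k : ℕ} {a b : Fin d → F}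
    (ha : a ∈ 𝓔) (hb : b ∈ 𝓔) (g : Fin k → (Fin d → F) × (Fin d → F))
    (hg : ∀ i, g i ∈ edgePartners 𝓔 r a b)
    (hfst : Injective (Prod.fst ∘ g)) (hsnd : Injective (Prod.snd ∘ g)) :
    ContainsPairOfStars 𝓔 k r := by
  have hpartner : ∀ i, ((g i).1 ∈ 𝓔 ∧ (g i).2 ∈ 𝓔) ∧ norm2 ((g i).2 - b) = r * norm2 ((g i).1 - a) ∧
      r * norm2 ((g i).1 - a) ≠ 0 := fun i => by
    simpa [edgePartners] using hg i
  refine ⟨Fin.cons a (Prod.fst ∘ g), Fin.cons b (Prod.snd ∘ g), ?_, ?_,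
    Fin.forall_fin_succ.2 ⟨ha, fun i => (hpartner i).1.1⟩,
    Fin.forall_fin_succ.2 ⟨hb, fun i => (hpartner i).1.2⟩, ?_⟩
  · refine Fin.cons_injective_iff.2 ⟨fun ⟨i, hi⟩ => ?_, hfst⟩
    exact ne_of_norm2_sub_ne_zero (right_ne_zero_of_mul (hpartner i).2.2) hi
  · refine Fin.cons_injective_iff.2 ⟨fun ⟨i, hi⟩ => ?_, hsnd⟩
    exact ne_of_norm2_sub_ne_zero ((hpartner i).2.1 ▸ (hpartner i).2.2) hi
  · intro i hi
    obtain ⟨j, rfl⟩ := Fin.exists_succ_eq.2 hi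
    simpa using (hpartner j).2

end Stars

theorem stars_of_Sset_one_large_general {F : Type*} [Field F] [Fintype F]
    {d : ℕ}
    (𝓔 : Finset (Fin d → F)) (h𝓔 : 𝓔.Nonempty) (r : F)
    {k : ℕ} (hk : 2 ≤ k)
    (hS : 2 * k.choose 2 * 𝓔.card ^ 3 ≤ (Sset 𝓔 1 r).card) :
    ContainsPairOfStars 𝓔 k r := by
  obtain ⟨m, rfl⟩ : ∃ m, k = m + 1 := ⟨k - 1, by omega⟩
  have he : 0 < #𝓔 := card_pos.2 h𝓔
  have hchoose : 2 * (m + 1).choose 2 = (m + 1) * m := by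
    rw [mul_comm, ← Nat.add_one_mul_choose_eq, Nat.choose_one_right]
  have hfew : m * (#𝓔 + #𝓔 - 1) < (m + 1) * m * #𝓔 := by
    calc m * (#𝓔 + #𝓔 - 1) < m * (2 * #𝓔) := Nat.mul_lt_mul_of_pos_left (by omega) (by omega)
      _ = 2 * (m * #𝓔) := by ring
      _ ≤ (m + 1) * (m * #𝓔) := Nat.mul_le_mul_right _ hk
      _ = (m + 1) * m * #𝓔 := by ring
  have hcount : ∑ _ab ∈ 𝓔 ×ˢ 𝓔, m * (#𝓔 + #𝓔 - 1) <
      ∑ ab ∈ 𝓔 ×ˢ 𝓔, #(edgePartners 𝓔 r ab.1 ab.2) :=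
    calc ∑ _ab ∈ 𝓔 ×ˢ 𝓔, m * (#𝓔 + #𝓔 - 1) = #𝓔 ^ 2 * (m * (#𝓔 + #𝓔 - 1)) := by
          rw [sum_const, card_product, smul_eq_mul, sq]
      _ < #𝓔 ^ 2 * ((m + 1) * m * #𝓔) := by gcongr
      _ = 2 * (m + 1).choose 2 * #𝓔 ^ 3 := by rw [hchoose]; ring
      _ ≤ #(Sset 𝓔 1 r) := hS
      _ ≤ _ := card_Sset_one_le_sum_card_edgePartners 𝓔 r
  obtain ⟨⟨a, b⟩, hab, hlarge⟩ := exists_lt_of_sum_lt hcount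
  obtain ⟨g, hgP, hfst, hsnd⟩ := exists_fin_matching 𝓔 𝓔 m
    (fun q hq => mem_product.1 (mem_filter.1 hq).1) hlarge
  exact containsPairOfStars_of_matching (mem_product.1 hab).1 (mem_product.1 hab).2 g hgP hfst hsnd

/-- For `k ≥ 2` and `𝓔` nonempty, if `|S_1(r)| ≥ 2·C(k,2)·|𝓔|³`,
then `𝓔` contains a pair of `k`-stars with dilation ratio `r`. -/
theorem stars_of_Sset_one_large {F : Type*} [Field F] [Fintype F]
    (hodd : Odd (Fintype.card F))
    {d : ℕ} (hd : 1 ≤ d)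
    (𝓔 : Finset (Fin d → F)) (h𝓔 : 𝓔.Nonempty) (r : F)
    {k : ℕ} (hk : 2 ≤ k)
    (hS : 2 * k.choose 2 * 𝓔.card ^ 3 ≤ (Sset 𝓔 1 r).card) :
    ContainsPairOfStars 𝓔 k r :=
  stars_of_Sset_one_large_general 𝓔 h𝓔 r hk hS
end

section
/- Let q be an odd prime power, d ≥ 2, 𝓔 ⊆ F_q^d a finite set, and r ∈ F_q. Then the number of tuples (x_1, x_2, x_3, x_4, x_5, y_1, y_2, y_3, y_4, y_5) ∈ P_4(r) satisfying x_2 = x_4 and y_2 ≠ y_4 is at most |𝓔|^3 · |P_1(r)| · min{q^(d−1), |𝓔|} · min{(3/2)·q^(d−1), |𝓔|}. -/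
open scoped Classical

/-- `P_k(r)`: tuples `(x₁, …, x_{k+1}, y₁, …, y_{k+1}) ∈ 𝓔^{2k+2}` with
`‖y_{i+1} − y_i‖ = r‖x_{i+1} − x_i‖ ≠ 0` for all `i = 1, …, k`. -/

noncomputable def Pset {F : Type*} [Field F] [Fintype F] {d : ℕ}
    (𝓔 : Finset (Fin d → F)) (k : ℕ) (r : F) :
    Finset ((Fin (k + 1) → Fin d → F) × (Fin (k + 1) → Fin d → F)) :=
  Finset.univ.filter fun p =>
    (∀ i, p.1 i ∈ 𝓔) ∧ (∀ i, p.2 i ∈ 𝓔) ∧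
    ∀ i : Fin k,
      norm2 (p.2 i.succ - p.2 i.castSucc) = r * norm2 (p.1 i.succ - p.1 i.castSucc) ∧
      r * norm2 (p.1 i.succ - p.1 i.castSucc) ≠ 0

/-!
Project each counted tuple to its first edge `((x₁, x₂), (y₁, y₂)) ∈ P₁(r)` and the points
`x₃, x₅, y₅`. Within a fibre, `y₄ ≠ y₂` lies on the sphere about `y₅` of radius
`r‖x₅ − x₄‖ = r‖x₅ − x₂‖ ≠ 0`, and since `‖x₃ − x₂‖ = ‖x₄ − x₃‖` the point `y₃` is equidistant
from `y₂` and `y₄`, i.e. lies on an affine hyperplane.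

For the sphere bound, split off two coordinates: `|S_{k+2}(t)| = ∑_w N(t − ‖w‖)` over `w ∈ F^k`,
where `N(s)` counts the points of `a² + b² = s`. Sums of two squares are multiplicative and every
element of `F` is one, so `N` is constant on `F^×`; with `∑_s N(s) = q²` and `N(0) ≤ 2q` this
gives `(q − 1)|S_{k+2}(t)| ≤ q^{k+2}` for `t ≠ 0`, hence `|S_{k+2}(t)| ≤ (3/2)q^{k+1}` as `q ≥ 3`.
-/

open Finset

section Norm2

variable {F : Type*} [Field F]

theorem norm2_sub_comm {d : ℕ} (x y : Fin d → F) : norm2 (x - y) = norm2 (y - x) := by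
  simp only [norm2, Pi.sub_apply]
  exact sum_congr rfl fun i _ => by ring

theorem norm2_smul {d : ℕ} (a : F) (x : Fin d → F) : norm2 (a • x) = a ^ 2 * norm2 x := by
  simp only [norm2, Pi.smul_apply, smul_eq_mul, mul_sum]
  exact sum_congr rfl fun i _ => by ring

theorem norm2_append {m n : ℕ} (x : Fin m → F) (y : Fin n → F) :
    norm2 (Fin.append x y) = norm2 x + norm2 y := by
  simp [norm2, Fin.sum_univ_add]

theorem norm2_two (x : Fin 2 → F) : norm2 x = x 0 ^ 2 + x 1 ^ 2 := Fin.sum_univ_two _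

end Norm2

section Sphere

variable {F : Type*} [Field F] [Fintype F]

variable (F) in
noncomputable def sphereCard (n : ℕ) (t : F) : ℕ := #{v : Fin n → F | norm2 v = t}

theorem sphereCard_add (m n : ℕ) (t : F) :
    sphereCard F (m + n) t = ∑ w : Fin n → F, sphereCard F m (t - norm2 w) := by
  simp only [sphereCard, card_filter]
  rw [← (Fin.appendEquiv m n).sum_comp, Fintype.sum_prod_type_right]
  refine sum_congr rfl fun w _ => sum_congr rfl fun v _ => ?_
  simp [Fin.appendEquiv, norm2_append, eq_sub_iff_add_eq]

theorem sum_sphereCard (n : ℕ) : ∑ t, sphereCard F n t = Fintype.card F ^ n := by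
  have := card_eq_sum_card_fiberwise (s := (univ : Finset (Fin n → F))) (f := norm2) (t := univ)
    fun _ _ => mem_coe.2 (mem_univ _)
  rw [card_univ, Fintype.card_fun, Fintype.card_fin] at this
  exact this.symm

theorem sphereCard_zero {t : F} (ht : t ≠ 0) : sphereCard F 0 t = 0 := by
  simp [sphereCard, norm2, ht.symm]

theorem sphereCard_one_le (t : F) : sphereCard F 1 t ≤ 2 := by
  calc sphereCard F 1 t ≤ #(Polynomial.nthRootsFinset 2 t) := by
        refine card_le_card_of_injOn (fun v => v 0) (fun v hv => ?_) fun v _ w _ h => ?_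
        · simpa [Polynomial.mem_nthRootsFinset, norm2] using hv
        · exact funext fun i => Subsingleton.elim i 0 ▸ h
    _ ≤ 2 := (Multiset.toFinset_card_le _).trans (Polynomial.card_nthRoots 2 t)

theorem sphereCard_one_add_le (n : ℕ) (t : F) :
    sphereCard F (1 + n) t ≤ 2 * Fintype.card F ^ n := by
  calc sphereCard F (1 + n) t ≤ ∑ _w : Fin n → F, 2 := by
        rw [sphereCard_add]; exact sum_le_sum fun w _ => sphereCard_one_le _
    _ = 2 * Fintype.card F ^ n := by simp [mul_comm]

theorem card_mul_sphereCard_le (n : ℕ) {t : F} (ht : t ≠ 0) :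
    Fintype.card F * sphereCard F n t ≤ 2 * Fintype.card F ^ n := by
  cases n with
  | zero => simp [sphereCard_zero ht]
  | succ n =>
    rw [pow_succ', Nat.add_comm, mul_left_comm]
    exact Nat.mul_le_mul_left _ (sphereCard_one_add_le n t)

/-- The map is multiplication by `p₀ + i p₁` in `F[i]`; it is injective as `p₀ − i p₁` inverts it
up to the factor `norm2 p`. -/
theorem sphereCard_two_le_mul_norm2 (u : F) {p : Fin 2 → F} (hp : norm2 p ≠ 0) :
    sphereCard F 2 u ≤ sphereCard F 2 (u * norm2 p) := by
  refine card_le_card_of_injOn (fun a => ![a 0 * p 0 - a 1 * p 1, a 0 * p 1 + a 1 * p 0])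
    (fun a ha => ?_) fun a _ b _ h => ?_
  · simp only [coe_filter, mem_univ, true_and, Set.mem_ofPred_eq, norm2_two] at ha ⊢
    simp only [Matrix.cons_val_zero, Matrix.cons_val_one]
    rw [← ha]; ring
  · have h0 := congrFun h 0
    have h1 := congrFun h 1
    simp only [Matrix.cons_val_zero, Matrix.cons_val_one] at h0 h1
    rw [norm2_two] at hp
    refine funext (Fin.forall_fin_two.2 ⟨?_, ?_⟩)
    · exact mul_right_cancel₀ hp (by linear_combination p 0 * h0 + p 1 * h1)
    · exact mul_right_cancel₀ hp (by linear_combination p 0 * h1 - p 1 * h0)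

theorem exists_norm2_eq (hodd : Odd (Fintype.card F)) (s : F) :
    ∃ p : Fin 2 → F, norm2 p = s := by
  open Polynomial in
  obtain ⟨a, b, hab⟩ : ∃ a b, (X ^ 2 : F[X]).eval a + (X ^ 2 - C s).eval b = 0 :=
    FiniteField.exists_root_sum_quadratic (degree_X_pow 2)
      (degree_X_pow_sub_C two_pos _) (Nat.odd_iff.mp hodd)
  refine ⟨![a, b], ?_⟩
  simp only [eval_pow, eval_X, eval_sub, eval_C] at hab
  simp only [norm2_two, Matrix.cons_val_zero, Matrix.cons_val_one]
  linear_combination hab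

theorem sphereCard_two_eq_of_ne_zero (hodd : Odd (Fintype.card F)) {s : F} (hs : s ≠ 0) :
    sphereCard F 2 s = sphereCard F 2 1 := by
  obtain ⟨p, hp⟩ := exists_norm2_eq hodd s
  have hp' : norm2 (s⁻¹ • p) = s⁻¹ := by rw [norm2_smul, hp]; field_simp
  apply le_antisymm
  · simpa [hp', hs] using sphereCard_two_le_mul_norm2 s (p := s⁻¹ • p) (by simpa [hp'])
  · simpa [hp] using sphereCard_two_le_mul_norm2 1 (p := p) (hp ▸ hs)

theorem sub_one_mul_sphereCard_two_one_add (hodd : Odd (Fintype.card F)) :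
    (Fintype.card F - 1) * sphereCard F 2 1 + sphereCard F 2 0 = Fintype.card F ^ 2 := by
  rw [← sum_sphereCard, ← add_sum_erase _ _ (mem_univ 0),
    sum_congr rfl fun s hs => sphereCard_two_eq_of_ne_zero hodd (ne_of_mem_erase hs), sum_const,
    card_erase_of_mem (mem_univ 0), card_univ, smul_eq_mul, add_comm]

theorem sub_one_mul_sphereCard_le (hodd : Odd (Fintype.card F)) (k : ℕ) {t : F} (ht : t ≠ 0) :
    ((Fintype.card F : ℤ) - 1) * sphereCard F (2 + k) t ≤ (Fintype.card F : ℤ) ^ (k + 2) := by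
  set q := Fintype.card F
  set c := sphereCard F 2 1
  set z := sphereCard F 2 0
  set m := sphereCard F k t
  have hq : 1 ≤ q := Fintype.card_pos
  have hcz : ((q : ℤ) - 1) * c + z = (q : ℤ) ^ 2 := by
    exact_mod_cast sub_one_mul_sphereCard_two_one_add hodd
  have hz : (z : ℤ) ≤ 2 * q := by
    exact_mod_cast (by simpa using sphereCard_one_add_le 1 (0 : F) : z ≤ 2 * q)
  have hm : (q : ℤ) * m ≤ 2 * (q : ℤ) ^ k := by exact_mod_cast card_mul_sphereCard_le k ht
  have hsum : ((q : ℤ) - 1) * sphereCard F (2 + k) t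
      = q ^ k * (((q : ℤ) - 1) * c) + m * (((q : ℤ) - 1) * (z - c)) := by
    have hterm : ∀ w : Fin k → F, ((q : ℤ) - 1) * sphereCard F 2 (t - norm2 w)
        = ((q : ℤ) - 1) * c + if norm2 w = t then ((q : ℤ) - 1) * (z - c) else 0 := by
      intro w
      split_ifs with hw
      · rw [hw, sub_self]; ring
      · rw [sphereCard_two_eq_of_ne_zero hodd (sub_ne_zero.2 (Ne.symm hw))]; ring
    rw [sphereCard_add, Nat.cast_sum, mul_sum, sum_congr rfl fun w _ => hterm w,
      sum_add_distrib, sum_const, card_univ, Fintype.card_fun, Fintype.card_fin, ← sum_filter,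
      sum_const]
    simp [m, sphereCard, q]
  have hqk : (0 : ℤ) ≤ q ^ k := by positivity
  have key : (q : ℤ) * m * (z - q) ≤ z * q ^ k := by
    rcases le_or_gt (z : ℤ) q with hzq | hzq
    · exact (mul_nonpos_of_nonneg_of_nonpos (by positivity) (by linarith)).trans (by positivity)
    · calc (q : ℤ) * m * (z - q) ≤ 2 * q ^ k * (z - q) := by gcongr
        _ ≤ z * q ^ k := by nlinarith
  rw [hsum]
  linear_combination (((q : ℤ) ^ k - m) * hcz) + key

theorem card_sphere_le (hodd : Odd (Fintype.card F)) {d : ℕ} (hd : 2 ≤ d) (c : Fin d → F)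
    {t : F} (ht : t ≠ 0) :
    (#{v | norm2 (c - v) = t} : ℝ) ≤ 3 / 2 * (Fintype.card F : ℝ) ^ (d - 1) := by
  obtain ⟨k, rfl⟩ : ∃ k, d = 2 + k := ⟨d - 2, by omega⟩
  have hcard : #{v | norm2 (c - v) = t} = sphereCard F (2 + k) t :=
    card_equiv (Equiv.subLeft c) fun v => by simp
  have hq : (3 : ℝ) ≤ Fintype.card F := by
    have := Fintype.one_lt_card (α := F)
    obtain ⟨n, hn⟩ := hodd
    exact_mod_cast (by omega : 3 ≤ Fintype.card F)
  have hS : ((Fintype.card F : ℝ) - 1) * sphereCard F (2 + k) t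
      ≤ (Fintype.card F : ℝ) ^ (k + 2) := by
    exact_mod_cast sub_one_mul_sphereCard_le hodd k ht
  rw [hcard, show 2 + k - 1 = k + 1 by omega]
  have hpow : (Fintype.card F : ℝ) ^ (k + 2) = Fintype.card F * (Fintype.card F : ℝ) ^ (k + 1) := by
    ring
  nlinarith

end Sphere

section Hyperplane

variable {F : Type*} [Field F] [Fintype F]

theorem card_filter_dotProduct_eq_le {ι : Type*} [Fintype ι] [DecidableEq ι] {c : ι → F}
    (hc : c ≠ 0) (a : F) :
    #{v : ι → F | c ⬝ᵥ v = a} ≤ Fintype.card F ^ (Fintype.card ι - 1) := by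
  obtain ⟨j, hj⟩ := Function.ne_iff.1 hc
  calc #{v : ι → F | c ⬝ᵥ v = a} ≤ #(univ : Finset ({i // i ≠ j} → F)) := by
        refine card_le_card_of_injOn (fun v i => v i) (fun _ _ => mem_coe.2 (mem_univ _))
          fun v hv w hw hvw => ?_
        simp only [coe_filter, mem_univ, true_and, Set.mem_ofPred_eq] at hv hw
        have hoff : v - w = Pi.single j (v j - w j) := by
          funext i
          by_cases hi : i = j
          · subst hi; simp
          · simpa [hi] using sub_eq_zero.2 (congrFun hvw ⟨i, hi⟩)
        have hvj : c j * (v j - w j) = 0 := by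
          rw [← dotProduct_single, ← hoff, dotProduct_sub, hv, hw, sub_self]
        rw [← sub_eq_zero, hoff, (mul_eq_zero.1 hvj).resolve_left hj, Pi.single_zero]
    _ = Fintype.card F ^ (Fintype.card ι - 1) := by
        simp [Fintype.card_subtype_compl]

theorem card_bisector_le (hodd : Odd (Fintype.card F)) {d : ℕ} {u w : Fin d → F} (huw : u ≠ w) :
    #{v | norm2 (v - u) = norm2 (w - v)} ≤ Fintype.card F ^ (d - 1) := by
  have h2 : (2 : F) ≠ 0 := Ring.two_ne_zero fun h => by
    have := FiniteField.even_card_iff_char_two.1 h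
    rw [Nat.odd_iff] at hodd
    omega
  have hlin : ∀ v, norm2 (v - u) - norm2 (w - v)
      = ((2 : F) • (w - u)) ⬝ᵥ v - (norm2 w - norm2 u) := by
    intro v
    simp only [norm2, dotProduct, ← sum_sub_distrib, Pi.sub_apply, Pi.smul_apply, smul_eq_mul]
    exact sum_congr rfl fun i _ => by ring
  calc #{v | norm2 (v - u) = norm2 (w - v)}
      ≤ #{v | ((2 : F) • (w - u)) ⬝ᵥ v = norm2 w - norm2 u} := by
        refine card_le_card fun v hv => ?_
        simp only [mem_filter, mem_univ, true_and] at hv ⊢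
        rw [← sub_eq_zero, ← hlin, hv, sub_self]
    _ ≤ Fintype.card F ^ (d - 1) := by
        simpa using card_filter_dotProduct_eq_le (smul_ne_zero h2 (sub_ne_zero.2 huw.symm)) _

end Hyperplane

theorem Finset.card_le_card_mul_of_fiber_le {α β R : Type*} [Semiring R] [PartialOrder R]
    [IsOrderedRing R] {s : Finset α} {t : Finset β} {f : α → β} (hf : ∀ a ∈ s, f a ∈ t)
    {n : R} (hn0 : 0 ≤ n) (hn : ∀ a ∈ s, (#{x ∈ s | f x = f a} : R) ≤ n) :
    (#s : R) ≤ #t * n := by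
  rw [card_eq_sum_card_fiberwise hf, Nat.cast_sum, ← nsmul_eq_mul]
  refine sum_le_card_nsmul _ _ _ fun b _ => ?_
  rcases (s.filter (f · = b)).eq_empty_or_nonempty with h | ⟨a, ha⟩
  · simpa [h] using hn0
  · rw [mem_filter] at ha
    simpa [ha.2] using hn a ha.1

section PathPairs

/-- With Lean's 0-based indices, for `p = (x, y)` this is `((x₁, x₂), (y₁, y₂))`, `x₃`, `x₅`, `y₅`
in the paper's notation: it forgets exactly `x₄` and `y₃`, `y₄`. -/
def firstEdgeAndEnds {α : Type*} (p : (Fin 5 → α) × (Fin 5 → α)) :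
    ((Fin 2 → α) × (Fin 2 → α)) × α × α × α :=
  ((p.1 ∘ Fin.castLE (by omega), p.2 ∘ Fin.castLE (by omega)), p.1 2, p.1 4, p.2 4)

theorem firstEdgeAndEnds_eq_iff {α : Type*} {p p' : (Fin 5 → α) × (Fin 5 → α)} :
    firstEdgeAndEnds p = firstEdgeAndEnds p' ↔ p.1 0 = p'.1 0 ∧ p.1 1 = p'.1 1 ∧
      p.2 0 = p'.2 0 ∧ p.2 1 = p'.2 1 ∧ p.1 2 = p'.1 2 ∧ p.1 4 = p'.1 4 ∧ p.2 4 = p'.2 4 := by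
  simp [firstEdgeAndEnds, funext_iff, Fin.forall_fin_two, and_assoc]

theorem eq_of_firstEdgeAndEnds_eq {α : Type*} {p p' : (Fin 5 → α) × (Fin 5 → α)}
    (hx : p.1 1 = p.1 3) (hx' : p'.1 1 = p'.1 3) (h : firstEdgeAndEnds p = firstEdgeAndEnds p')
    (h₂ : p.2 2 = p'.2 2) (h₃ : p.2 3 = p'.2 3) : p = p' := by
  obtain ⟨hx₀, hx₁, hy₀, hy₁, hx₂, hx₄, hy₄⟩ := firstEdgeAndEnds_eq_iff.1 h
  refine Prod.ext (funext fun i => ?_) (funext fun i => ?_) <;> fin_cases i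
  all_goals first | assumption | exact hx ▸ hx' ▸ hx₁

variable {F : Type*} [Field F] [Fintype F] {d : ℕ} {𝓔 : Finset (Fin d → F)} {r : F}

theorem mem_Pset {k : ℕ} {p : (Fin (k + 1) → Fin d → F) × (Fin (k + 1) → Fin d → F)} :
    p ∈ Pset 𝓔 k r ↔ (∀ i, p.1 i ∈ 𝓔) ∧ (∀ i, p.2 i ∈ 𝓔) ∧ ∀ i : Fin k,
      norm2 (p.2 i.succ - p.2 i.castSucc) = r * norm2 (p.1 i.succ - p.1 i.castSucc) ∧
      r * norm2 (p.1 i.succ - p.1 i.castSucc) ≠ 0 := by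
  simp [Pset]

theorem castLE_mem_Pset {m k : ℕ} (h : m + 1 ≤ k + 1)
    {p : (Fin (k + 1) → Fin d → F) × (Fin (k + 1) → Fin d → F)} (hp : p ∈ Pset 𝓔 k r) :
    (p.1 ∘ Fin.castLE h, p.2 ∘ Fin.castLE h) ∈ Pset 𝓔 m r := by
  obtain ⟨hx, hy, hedge⟩ := mem_Pset.1 hp
  exact mem_Pset.2 ⟨fun i => hx _, fun i => hy _, fun i => hedge (Fin.castLE (by omega) i)⟩

theorem firstEdgeAndEnds_mem {p : (Fin 5 → Fin d → F) × (Fin 5 → Fin d → F)}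
    (hp : p ∈ Pset 𝓔 4 r) : firstEdgeAndEnds p ∈ Pset 𝓔 1 r ×ˢ (𝓔 ×ˢ 𝓔 ×ˢ 𝓔) := by
  obtain ⟨hx, hy, -⟩ := mem_Pset.1 hp
  exact mem_product.2 ⟨castLE_mem_Pset _ hp, mem_product.2 ⟨hx 2, mem_product.2 ⟨hx 4, hy 4⟩⟩⟩

theorem norm2_middle_eq {p : (Fin 5 → Fin d → F) × (Fin 5 → Fin d → F)} (hp : p ∈ Pset 𝓔 4 r)
    (hx : p.1 1 = p.1 3) : norm2 (p.2 2 - p.2 1) = norm2 (p.2 3 - p.2 2) := by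
  have h₁ : norm2 (p.2 2 - p.2 1) = r * norm2 (p.1 2 - p.1 1) := ((mem_Pset.1 hp).2.2 1).1
  have h₂ : norm2 (p.2 3 - p.2 2) = r * norm2 (p.1 3 - p.1 2) := ((mem_Pset.1 hp).2.2 2).1
  rw [h₁, h₂, ← hx, norm2_sub_comm]

noncomputable def PsetDeg24 (𝓔 : Finset (Fin d → F)) (r : F) :
    Finset ((Fin 5 → Fin d → F) × (Fin 5 → Fin d → F)) :=
  {p ∈ Pset 𝓔 4 r | p.1 1 = p.1 3 ∧ p.2 1 ≠ p.2 3}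

theorem mem_PsetDeg24 {p : (Fin 5 → Fin d → F) × (Fin 5 → Fin d → F)} :
    p ∈ PsetDeg24 𝓔 r ↔ p ∈ Pset 𝓔 4 r ∧ p.1 1 = p.1 3 ∧ p.2 1 ≠ p.2 3 :=
  mem_filter

theorem card_filter_firstEdgeAndEnds_y₄_le (hodd : Odd (Fintype.card F))
    {p₁ : (Fin 5 → Fin d → F) × (Fin 5 → Fin d → F)} (hp₁ : p₁ ∈ PsetDeg24 𝓔 r) :
    (#{p ∈ PsetDeg24 𝓔 r | firstEdgeAndEnds p = firstEdgeAndEnds p₁ ∧ p.2 3 = p₁.2 3} : ℝ)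
      ≤ min ((Fintype.card F : ℝ) ^ (d - 1)) #𝓔 := by
  obtain ⟨-, -, hy₁⟩ := mem_PsetDeg24.1 hp₁
  have hinj : #{p ∈ PsetDeg24 𝓔 r | firstEdgeAndEnds p = firstEdgeAndEnds p₁ ∧ p.2 3 = p₁.2 3}
      ≤ #{v ∈ 𝓔 | norm2 (v - p₁.2 1) = norm2 (p₁.2 3 - v)} := by
    refine card_le_card_of_injOn (fun p => p.2 2) (fun p hp => ?_) fun p hp p' hp' h => ?_
    · simp only [coe_filter, Set.mem_ofPred_eq, mem_PsetDeg24] at hp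
      obtain ⟨⟨hpP, hx, -⟩, hφ, h₃⟩ := hp
      obtain ⟨-, -, -, hy, -⟩ := firstEdgeAndEnds_eq_iff.1 hφ
      refine mem_filter.2 ⟨(mem_Pset.1 hpP).2.1 2, ?_⟩
      rw [← hy, ← h₃]
      exact norm2_middle_eq hpP hx
    · simp only [coe_filter, Set.mem_ofPred_eq, mem_PsetDeg24] at hp hp'
      exact eq_of_firstEdgeAndEnds_eq hp.1.2.1 hp'.1.2.1 (hp.2.1.trans hp'.2.1.symm) h
        (hp.2.2.trans hp'.2.2.symm)
  refine (Nat.cast_le.2 hinj).trans (le_min ?_ (by exact_mod_cast card_filter_le _ _))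
  exact_mod_cast (card_le_card (filter_subset_filter _ (subset_univ 𝓔))).trans
    (card_bisector_le hodd hy₁)

theorem card_filter_firstEdgeAndEnds_le (hodd : Odd (Fintype.card F)) (hd : 2 ≤ d)
    {p₀ : (Fin 5 → Fin d → F) × (Fin 5 → Fin d → F)} (hp₀ : p₀ ∈ PsetDeg24 𝓔 r) :
    (#{p ∈ PsetDeg24 𝓔 r | firstEdgeAndEnds p = firstEdgeAndEnds p₀} : ℝ)
      ≤ min (3 / 2 * (Fintype.card F : ℝ) ^ (d - 1)) #𝓔
        * min ((Fintype.card F : ℝ) ^ (d - 1)) #𝓔 := by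
  obtain ⟨hp₀P, hx₀, -⟩ := mem_PsetDeg24.1 hp₀
  have hρ : r * norm2 (p₀.1 4 - p₀.1 3) ≠ 0 := ((mem_Pset.1 hp₀P).2.2 3).2
  set sphere := {v ∈ 𝓔 | norm2 (p₀.2 4 - v) = r * norm2 (p₀.1 4 - p₀.1 3)}
  have hsphere : (#sphere : ℝ) ≤ min (3 / 2 * (Fintype.card F : ℝ) ^ (d - 1)) #𝓔 :=
    le_min ((Nat.cast_le.2 (card_le_card (filter_subset_filter _ (subset_univ 𝓔)))).trans
      (card_sphere_le hodd hd _ hρ)) (by exact_mod_cast card_filter_le _ _)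
  have hbis : (0 : ℝ) ≤ min ((Fintype.card F : ℝ) ^ (d - 1)) #𝓔 := by positivity
  refine (card_le_card_mul_of_fiber_le (t := sphere) (f := fun p => p.2 3) (fun p hp => ?_)
    hbis fun p₁ hp₁ => ?_).trans (mul_le_mul_of_nonneg_right hsphere hbis)
  · obtain ⟨hpP, hφ⟩ := mem_filter.1 hp
    obtain ⟨-, hx₁, -, -, -, hx₄, hy₄⟩ := firstEdgeAndEnds_eq_iff.1 hφ
    refine mem_filter.2 ⟨(mem_Pset.1 (mem_PsetDeg24.1 hpP).1).2.1 3, ?_⟩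
    have hedge : norm2 (p.2 4 - p.2 3) = r * norm2 (p.1 4 - p.1 3) :=
      ((mem_Pset.1 (mem_PsetDeg24.1 hpP).1).2.2 3).1
    rw [← hy₄, ← hx₄, ← hx₀, ← hx₁, (mem_PsetDeg24.1 hpP).2.1, hedge]
  · obtain ⟨hp₁P, hφ₁⟩ := mem_filter.1 hp₁
    refine (Nat.cast_le.2 (card_le_card fun p hp => ?_)).trans
      (card_filter_firstEdgeAndEnds_y₄_le hodd hp₁P)
    simp only [mem_filter] at hp ⊢
    exact ⟨hp.1.1, hp.1.2.trans hφ₁.symm, hp.2⟩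
end PathPairs

/-- For `d ≥ 2`, the number of tuples in `P_4(r)` with `x₂ = x₄` and
`y₂ ≠ y₄` is at most `|𝓔|³·|P_1(r)|·min{q^(d−1), |𝓔|}·min{(3/2)·q^(d−1), |𝓔|}`. -/
theorem Pset_deg24_x_card_le {F : Type*} [Field F] [Fintype F]
    (hodd : Odd (Fintype.card F))
    {d : ℕ} (hd : 2 ≤ d)
    (𝓔 : Finset (Fin d → F)) (r : F) :
    ((((Pset 𝓔 4 r).filter fun p => p.1 1 = p.1 3 ∧ p.2 1 ≠ p.2 3).card : ℝ))
      ≤ (𝓔.card : ℝ) ^ 3 * ((Pset 𝓔 1 r).card : ℝ)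
        * min ((Fintype.card F : ℝ) ^ (d - 1)) (𝓔.card : ℝ)
        * min (3 / 2 * (Fintype.card F : ℝ) ^ (d - 1)) (𝓔.card : ℝ) := by
  change ((PsetDeg24 𝓔 r).card : ℝ) ≤ _
  calc ((PsetDeg24 𝓔 r).card : ℝ)
      ≤ ((Pset 𝓔 1 r ×ˢ (𝓔 ×ˢ 𝓔 ×ˢ 𝓔)).card : ℝ)
        * (min (3 / 2 * (Fintype.card F : ℝ) ^ (d - 1)) 𝓔.card
          * min ((Fintype.card F : ℝ) ^ (d - 1)) 𝓔.card) :=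
      Finset.card_le_card_mul_of_fiber_le
        (fun p hp => firstEdgeAndEnds_mem (mem_PsetDeg24.1 hp).1) (by positivity)
        fun p hp => card_filter_firstEdgeAndEnds_le hodd hd hp
    _ = _ := by
      simp only [Finset.card_product, Nat.cast_mul]
      ring
end
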